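/- For any subset A ⊆ X, the polar transform of the generalized indicator χ_A = ι_A + 1 (value 1 on A, +∞ off A) equals the Minkowski functional of the polar set A°: (χ_A)° = μ_{A°}. -/
import Mathlib


open scoped Pointwise ENNReal Classical

/-- The Minkowski functional of a set `A`, with values in `[0,∞]` and `inf ∅ = +∞`. -/
noncomputable def mink {M : Type*} [AddCommGroup M] [Module ℝ M] (A : Set M) (x : M) : ℝ≥0∞ :=
  sInf (ENNReal.ofReal '' {r : ℝ | 0 < r ∧ x ∈ r • A})

/-- The (one-sided) polar of a set `A ⊆ X`, as a subset of `Y`. -/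
def polarSet {X Y : Type*} [AddCommGroup X] [Module ℝ X] [AddCommGroup Y] [Module ℝ Y]
    (p : X →ₗ[ℝ] Y →ₗ[ℝ] ℝ) (A : Set X) : Set Y :=
  {y | ∀ x ∈ A, p x y ≤ 1}

/-- The polar transform of a `[0,∞]`-valued function `g`:
`g°(y) = inf{λ > 0 : ⟨x,y⟩ ≤ λ g(x) for all x}`, with `inf ∅ = +∞`. -/
noncomputable def polarTr {X Y : Type*} [AddCommGroup X] [Module ℝ X]
    [AddCommGroup Y] [Module ℝ Y] (p : X →ₗ[ℝ] Y →ₗ[ℝ] ℝ) (g : X → ℝ≥0∞) (y : Y) : ℝ≥0∞ :=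
  sInf {l : ℝ≥0∞ | ∃ r : ℝ, 0 < r ∧ l = ENNReal.ofReal r ∧
    ∀ x : X, (p x y : EReal) ≤ ((ENNReal.ofReal r * g x : ℝ≥0∞) : EReal)}

/-- The polar transform of the generalized indicator `χ_A` (value `1` on `A`, `+∞` off `A`)
is the Minkowski functional of the polar set `A°`. -/
theorem polarTr_genIndicator {X Y : Type*} [AddCommGroup X] [Module ℝ X]
    [AddCommGroup Y] [Module ℝ Y] (p : X →ₗ[ℝ] Y →ₗ[ℝ] ℝ) (A : Set X) :
    polarTr p (fun x => if x ∈ A then (1 : ℝ≥0∞) else ⊤) = mink (polarSet p A) := by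
  funext y
  unfold polarTr mink
  congr 1
  ext l
  simp only [Set.mem_setOf_eq, Set.mem_image]
  constructor
  · rintro ⟨r, hr, rfl, h⟩
    refine ⟨r, ⟨hr, ?_⟩, rfl⟩
    rw [Set.mem_smul_set_iff_inv_smul_mem₀ (ne_of_gt hr)]
    intro x hx
    have hx' := h x
    rw [if_pos hx, mul_one, EReal.coe_ennreal_ofReal, max_eq_left hr.le] at hx'
    have h2 : (p x) y ≤ r := by exact_mod_cast hx'
    rw [map_smul, smul_eq_mul, inv_mul_le_iff₀ hr, mul_one]
    exact h2
  · rintro ⟨r, ⟨hr, hy⟩, rfl⟩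
    refine ⟨r, hr, rfl, fun x => ?_⟩
    by_cases hx : x ∈ A
    · rw [if_pos hx, mul_one, EReal.coe_ennreal_ofReal, max_eq_left hr.le,
        EReal.coe_le_coe_iff]
      rw [Set.mem_smul_set_iff_inv_smul_mem₀ (ne_of_gt hr)] at hy
      have := hy x hx
      rw [map_smul, smul_eq_mul, inv_mul_le_iff₀ hr, mul_one] at this
      exact this
    · rw [if_neg hx, ENNReal.mul_top (by simpa [ENNReal.ofReal_pos] using hr),
        EReal.coe_ennreal_top]
      exact le_top
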